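/- arXiv:1502.06004 — 5 statements merged into one kernel-verified Lean document; each statement's English description precedes it below -/
import Mathlib

section
/- Let {X_z}_{z=1}^{m*} and {K_i}_{i=1}^{m} be two partitions of a finite index set J with nonnegative weights e_j. Suppose each block X_z intersects at most r of the blocks K_i (r ≥ 1). Then for any real b ≥ 1, ∑_z (∑_{j∈X_z} e_j)^b ≤ r^{b-1} · ∑_i (∑_{j∈K_i} e_j)^b. -/
open NNReal Finset

lemma sum_rpow_le_rpow_sum' {ι : Type*} (s : Finset ι) (f : ι → ℝ≥0) {p : ℝ}
    (hp : 1 ≤ p) : ∑ i ∈ s, f i ^ p ≤ (∑ i ∈ s, f i) ^ p := by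
  classical
  induction s using Finset.induction_on with
  | empty => simp [NNReal.zero_rpow (by positivity : p ≠ 0)]
  | @insert a s hx ih =>
    rw [Finset.sum_insert hx, Finset.sum_insert hx]
    calc f a ^ p + ∑ i ∈ s, f i ^ p ≤ f a ^ p + (∑ i ∈ s, f i) ^ p := by gcongr
      _ ≤ (f a + ∑ i ∈ s, f i) ^ p := NNReal.add_rpow_le_rpow_add _ _ hp

lemma partition_sum' {J : Type*} [Fintype J] [DecidableEq J] (e : J → ℝ≥0) {m : ℕ}
    (K : Fin m → Finset J)
    (hKdisj : ∀ i i' : Fin m, i ≠ i' → Disjoint (K i) (K i'))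
    (hKcover : ∀ j : J, ∃ i, j ∈ K i) (A : Finset J) :
    ∑ j ∈ A, e j = ∑ i, ∑ j ∈ A ∩ K i, e j := by
  have : ∀ i, ∑ j ∈ A ∩ K i, e j = ∑ j ∈ A, if j ∈ K i then e j else 0 := by
    intro i
    rw [← Finset.sum_filter]
    congr 1
  simp_rw [this]
  rw [Finset.sum_comm]
  refine Finset.sum_congr rfl fun j _ => ?_
  obtain ⟨i0, hi0⟩ := hKcover j
  rw [Finset.sum_eq_single i0]
  · simp [hi0]
  · intro i _ hne
    have : j ∉ K i := fun hj =>
      Finset.disjoint_left.mp (hKdisj i i0 hne) hj hi0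
    simp [this]
  · simp

theorem two_partition_cost_bound (J : Type*) [Fintype J] [DecidableEq J]
    (e : J → ℝ≥0) (mstar m : ℕ)
    (X : Fin mstar → Finset J) (K : Fin m → Finset J)
    (hXdisj : ∀ z z' : Fin mstar, z ≠ z' → Disjoint (X z) (X z'))
    (hXcover : ∀ j : J, ∃ z, j ∈ X z)
    (hKdisj : ∀ i i' : Fin m, i ≠ i' → Disjoint (K i) (K i'))
    (hKcover : ∀ j : J, ∃ i, j ∈ K i)
    (r : ℕ) (hr : 1 ≤ r)
    (hmeet : ∀ z : Fin mstar,
      (Finset.univ.filter (fun i : Fin m => (X z ∩ K i).Nonempty)).card ≤ r)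
    (b : ℝ) (hb : 1 ≤ b) :
    ∑ z, (∑ j ∈ X z, e j) ^ b ≤ (r : ℝ≥0) ^ (b - 1) * ∑ i, (∑ j ∈ K i, e j) ^ b := by
  classical
  set t : Fin mstar → Fin m → ℝ≥0 := fun z i => ∑ j ∈ X z ∩ K i, e j with ht
  have hb0 : (0 : ℝ) ≤ b - 1 := by linarith
  have step1 : ∀ z, (∑ j ∈ X z, e j) ^ b ≤ (r : ℝ≥0) ^ (b - 1) * ∑ i, t z i ^ b := by
    intro z
    set S := Finset.univ.filter (fun i : Fin m => (X z ∩ K i).Nonempty) with hS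
    have hsum : ∑ j ∈ X z, e j = ∑ i ∈ S, t z i := by
      rw [partition_sum' e K hKdisj hKcover (X z)]
      refine (Finset.sum_filter_of_ne ?_).symm
      intro i _ hne
      rcases Finset.eq_empty_or_nonempty (X z ∩ K i) with h | h
      · exact absurd (by simp [ht, h]) hne
      · exact h
    rw [hsum]
    calc (∑ i ∈ S, t z i) ^ b ≤ (S.card : ℝ≥0) ^ (b - 1) * ∑ i ∈ S, t z i ^ b :=
          NNReal.rpow_sum_le_const_mul_sum_rpow S _ hb
      _ ≤ (r : ℝ≥0) ^ (b - 1) * ∑ i, t z i ^ b := by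
          gcongr
          · exact_mod_cast hmeet z
          · exact Finset.subset_univ S
  calc ∑ z, (∑ j ∈ X z, e j) ^ b ≤ ∑ z, (r : ℝ≥0) ^ (b - 1) * ∑ i, t z i ^ b :=
        Finset.sum_le_sum fun z _ => step1 z
    _ = (r : ℝ≥0) ^ (b - 1) * ∑ i, ∑ z, t z i ^ b := by
        rw [← Finset.mul_sum, Finset.sum_comm]
    _ ≤ (r : ℝ≥0) ^ (b - 1) * ∑ i, (∑ j ∈ K i, e j) ^ b := by
        gcongr with i _
        have : ∑ j ∈ K i, e j = ∑ z, t z i := by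
          have := partition_sum' e X hXdisj hXcover (K i)
          simpa [ht, Finset.inter_comm] using this
        rw [this]
        exact sum_rpow_le_rpow_sum' _ _ hb
end

section
/- Consider n jobs with arrival times a₁ ≤ a₂ ≤ … ≤ a_n (natural numbers) and job allowances l_j ≥ l_min ≥ 1. Suppose a sequence of nonempty groups K_1,…,K_m partitions the jobs such that for every i < m, every job in K_{i+1} arrives strictly more than l_min − 1 time slots after the earliest arrival of a job in K_i (formally: for each i there exists j ∈ K_i such that a_k − a_j ≥ l_min for all k ∈ K_{i+1}), with a₁ belonging to K_1 and a_n to K_m. Then m ≤ (a_n − a₁)/l_min + 2. -/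
open Finset

theorem online_attack_clique_count_bound (n m : ℕ) (hn : 0 < n) (hm : 0 < m)
    (a : Fin n → ℕ) (hsorted : Monotone a)
    (lmin : ℕ) (hl : 1 ≤ lmin)
    (K : Fin m → Finset (Fin n))
    (hne : ∀ i, (K i).Nonempty)
    (hdisj : ∀ i i' : Fin m, i ≠ i' → Disjoint (K i) (K i'))
    (hcover : ∀ j : Fin n, ∃ i, j ∈ K i)
    (hfirst : (⟨0, hn⟩ : Fin n) ∈ K ⟨0, hm⟩)
    (hlast : (⟨n - 1, by omega⟩ : Fin n) ∈ K ⟨m - 1, by omega⟩)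
    (hsep : ∀ i : ℕ, ∀ hi : i + 1 < m,
      ∃ j ∈ K ⟨i, by omega⟩, ∀ k ∈ K ⟨i + 1, hi⟩, a j + lmin ≤ a k) :
    (m : ℝ) ≤ ((a ⟨n - 1, by omega⟩ : ℝ) - (a ⟨0, hn⟩ : ℝ)) / (lmin : ℝ) + 2 := by
  have lr : (0:ℝ) < (lmin:ℝ) := by exact_mod_cast hl
  have hle : a ⟨0, hn⟩ ≤ a ⟨n - 1, by omega⟩ := hsorted (by simp)
  rcases Nat.lt_or_ge m 2 with h2 | h2
  · have hm1 : m = 1 := by omega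
    have : (0:ℝ) ≤ ((a ⟨n - 1, by omega⟩ : ℝ) - (a ⟨0, hn⟩ : ℝ)) / (lmin : ℝ) := by
      apply div_nonneg _ lr.le
      have : (a ⟨0, hn⟩ : ℝ) ≤ (a ⟨n - 1, by omega⟩ : ℝ) := by exact_mod_cast hle
      linarith
    rw [hm1]; push_cast; linarith
  · choose j hjK hj using hsep
    have claim : ∀ i : ℕ, ∀ hi : i + 1 < m, ∀ k ∈ K ⟨i + 1, hi⟩,
        a ⟨0, hn⟩ + (i + 1) * lmin ≤ a k := by
      intro i
      induction i with
      | zero =>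
        intro hi k hk
        have h0 : a ⟨0, hn⟩ ≤ a (j 0 hi) := hsorted (by simp [Fin.le_def])
        have := hj 0 hi k hk
        omega
      | succ i ih =>
        intro hi k hk
        have hi' : i + 1 < m := by omega
        have h1 := ih hi' (j (i+1) hi) (hjK (i+1) hi)
        have h2 := hj (i+1) hi k hk
        have e : (i + 1 + 1) * lmin = (i + 1) * lmin + lmin := by ring
        omega
    have hi : (m - 2) + 1 < m := by omega
    have key := claim (m - 2) hi (⟨n - 1, by omega⟩)
      (by
        have : (⟨(m - 2) + 1, hi⟩ : Fin m) = ⟨m - 1, by omega⟩ := by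
          ext; simp; omega
        rw [this]; exact hlast)
    have key2 : a ⟨0, hn⟩ + (m - 1) * lmin ≤ a ⟨n - 1, by omega⟩ := by
      have e : (m - 2 + 1) * lmin = (m - 1) * lmin := by
        congr 1; omega
      omega
    have hR : (a ⟨0, hn⟩ : ℝ) + ((m:ℝ) - 1) * lmin ≤ (a ⟨n - 1, by omega⟩ : ℝ) := by
      have hm1 : (1:ℕ) ≤ m := hm
      have hR0 : ((a ⟨0, hn⟩ : ℕ) : ℝ) + ((m - 1 : ℕ) : ℝ) * (lmin : ℝ)
          ≤ ((a ⟨n - 1, by omega⟩ : ℕ) : ℝ) := by exact_mod_cast key2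
      rw [Nat.cast_sub hm1] at hR0
      push_cast at hR0 ⊢
      linarith
    have hdiv : (m:ℝ) - 1 ≤ ((a ⟨n - 1, by omega⟩ : ℝ) - (a ⟨0, hn⟩ : ℝ)) / (lmin : ℝ) := by
      rw [le_div_iff₀ lr]; linarith
    linarith
end

section
/- Let jobs 1,…,n have arrival times a_j ∈ ℕ (sorted non-decreasingly), energies e_j ≥ 0, and minimum allowance l_min ≥ 1. If there exists a partition of the jobs into m groups with m ≤ (a_n − a₁)/l_min + 2, then for real b ≥ 1 the maximum achievable attack cost C_max (over all clique partitions, where a partition's cost is the sum over groups of (group total energy)^b) satisfies C_max ≥ (l_min · ∑_j e_j / (2·l_min + a_n − a₁))^b. -/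
open NNReal Finset

/-!
Since the groups cover the jobs, the total energy `E` is at most the sum of the group energies,
so the power-mean inequality gives `(E / m) ^ b ≤ ∑ (group energy) ^ b ≤ C_max`. The bound on the
number of groups reads `l_min * m ≤ 2 * l_min + (a_n - a₁)`, hence
`l_min * E / (2 * l_min + (a_n - a₁)) ≤ E / m`.
-/

theorem Finset.sum_le_sum_sum_of_forall_exists_mem {ι κ M : Type*} [Fintype ι] [Fintype κ]
    [AddCommMonoid M] [PartialOrder M] [IsOrderedAddMonoid M] [CanonicallyOrderedAdd M]
    (e : κ → M) (K : ι → Finset κ) (hcover : ∀ j, ∃ i, j ∈ K i) :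
    ∑ j, e j ≤ ∑ i, ∑ j ∈ K i, e j := by
  classical
  calc ∑ j, e j ≤ ∑ j, ∑ i, if j ∈ K i then e j else 0 := by
        refine sum_le_sum fun j _ => ?_
        obtain ⟨i, hi⟩ := hcover j
        simpa [hi] using single_le_sum (f := fun i => if j ∈ K i then e j else 0)
          (fun _ _ => zero_le) (mem_univ i)
    _ = ∑ i, ∑ j ∈ K i, e j := by
        rw [sum_comm]
        simp_rw [← sum_filter]
        simp

theorem NNReal.rpow_sum_div_card_le_sum_rpow {ι : Type*} [Fintype ι] [Nonempty ι]
    (x : ι → ℝ≥0) {p : ℝ} (hp : 1 ≤ p) :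
    ((∑ i, x i) / Fintype.card ι) ^ p ≤ ∑ i, x i ^ p := by
  have hcard : 1 ≤ (Fintype.card ι : ℝ≥0) := by simp [Nat.one_le_iff_ne_zero, Fintype.card_ne_zero]
  have hw : ∑ _i : ι, (Fintype.card ι : ℝ≥0)⁻¹ = 1 := by simp [card_univ]
  calc ((∑ i, x i) / Fintype.card ι) ^ p
      = (∑ i, (Fintype.card ι : ℝ≥0)⁻¹ * x i) ^ p := by rw [← mul_sum, div_eq_inv_mul]
    _ ≤ ∑ i, (Fintype.card ι : ℝ≥0)⁻¹ * x i ^ p :=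
        rpow_arith_mean_le_arith_mean_rpow univ _ x hw hp
    _ = (Fintype.card ι : ℝ≥0)⁻¹ * ∑ i, x i ^ p := by rw [mul_sum]
    _ ≤ ∑ i, x i ^ p :=
        mul_le_of_le_one_left zero_le (inv_le_one_of_one_le₀ hcard)

theorem Nat.mul_le_two_mul_add_tsub_of_le_div_add_two {l m A B : ℕ}
    (h : (m : ℝ) ≤ ((A : ℝ) - B) / l + 2) : l * m ≤ 2 * l + (A - B) := by
  rcases l.eq_zero_or_pos with rfl | hl
  · simp
  have hl' : (0 : ℝ) < l := by exact_mod_cast hl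
  have hsub : (A : ℝ) - B ≤ ((A - B : ℕ) : ℝ) := by
    rw [sub_le_iff_le_add, ← Nat.cast_add]; exact_mod_cast le_tsub_add
  have : (l : ℝ) * m ≤ 2 * l + ((A - B : ℕ) : ℝ) := by
    rw [div_add' _ _ _ hl'.ne', le_div_iff₀ hl'] at h
    nlinarith
  exact_mod_cast this

theorem NNReal.mul_div_le_div_of_mul_le {l m N : ℝ≥0} (E : ℝ≥0) (h : l * m ≤ N) (hm : 0 < m) :
    l * E / N ≤ E / m := by
  rcases eq_zero_or_pos l with rfl | hl
  · simp
  calc l * E / N ≤ l * E / (l * m) := div_le_div_of_nonneg_left zero_le (by positivity) h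
    _ = E / m := mul_div_mul_left E m hl.ne'

theorem cmax_lower_bound (n : ℕ) (hn : 0 < n)
    (a : Fin n → ℕ)
    (e : Fin n → ℝ≥0)
    (lmin : ℕ)
    (b : ℝ) (hb : 1 ≤ b)
    (m : ℕ) (K : Fin m → Finset (Fin n))
    (hcover : ∀ j : Fin n, ∃ i, j ∈ K i)
    (hm : (m : ℝ) ≤ ((a ⟨n - 1, by omega⟩ : ℝ) - (a ⟨0, hn⟩ : ℝ)) / (lmin : ℝ) + 2)
    (Cmax : ℝ≥0)
    (hCmax : ∑ i, (∑ j ∈ K i, e j) ^ b ≤ Cmax) :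
    ((lmin : ℝ≥0) * ∑ j, e j /
        (2 * (lmin : ℝ≥0) + ((a ⟨n - 1, by omega⟩ - a ⟨0, hn⟩ : ℕ) : ℝ≥0))) ^ b
      ≤ Cmax := by
  obtain ⟨i₀, -⟩ := hcover ⟨0, hn⟩
  have : Nonempty (Fin m) := ⟨i₀⟩
  have hcount : (lmin : ℝ≥0) * m ≤ 2 * lmin + ((a ⟨n - 1, by omega⟩ - a ⟨0, hn⟩ : ℕ) : ℝ≥0) := by
    exact_mod_cast Nat.mul_le_two_mul_add_tsub_of_le_div_add_two hm
  calc _ = ((lmin : ℝ≥0) * (∑ j, e j) /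
        (2 * (lmin : ℝ≥0) + ((a ⟨n - 1, by omega⟩ - a ⟨0, hn⟩ : ℕ) : ℝ≥0))) ^ b := by
        rw [← sum_div, mul_div_assoc]
    _ ≤ ((∑ j, e j) / m) ^ b :=
        rpow_le_rpow (mul_div_le_div_of_mul_le _ hcount (by simpa using i₀.pos)) (by linarith)
    _ ≤ ((∑ i, ∑ j ∈ K i, e j) / Fintype.card (Fin m)) ^ b := by
        rw [Fintype.card_fin]
        gcongr
        exact sum_le_sum_sum_of_forall_exists_mem e K hcover
    _ ≤ Cmax := (rpow_sum_div_card_le_sum_rpow _ hb).trans hCmax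
end

section
/- In the total-energy model with cost C(E) = E^b for real b ≥ 2, if the AVR schedule (each job j served at constant rate e_j/l_j over its interval of length l_j) has cost C_AVR, and C_AVR ≤ 2^{b-1} b^b C_min, then the maximum attack cost satisfies C_max ≤ 2^{b-1} (l_max + 1)^b b^b C_min, where l_max is the maximum job interval length. -/
open Finset

theorem cmax_upper_bound (n T : ℕ) (a l : Fin n → ℕ) (lmax : ℕ)
    (hl : ∀ j, l j ≤ lmax) (hT : ∀ j, a j + l j ≤ T)
    (e : Fin n → ℝ) (he : ∀ j, 0 ≤ e j)
    (b : ℝ) (hb : 2 ≤ b)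
    (Cmin Cmax CAVR : ℝ) (hCmin : 0 ≤ Cmin)
    (hCAVR : CAVR = ∑ s ∈ Finset.range (T + 1),
      (∑ j ∈ Finset.univ.filter (fun j : Fin n => a j ≤ s ∧ s ≤ a j + l j),
        e j / ((l j : ℝ) + 1)) ^ b)
    (hYDS : CAVR ≤ 2 ^ (b - 1) * b ^ b * Cmin)
    (m : ℕ) (K : Fin m → Finset (Fin n))
    (hdisj : ∀ i i' : Fin m, i ≠ i' → Disjoint (K i) (K i'))
    (hcover : ∀ j : Fin n, ∃ i, j ∈ K i)
    (ts : Fin m → ℕ) (hinj : Function.Injective ts)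
    (hts : ∀ z : Fin m, ∀ j ∈ K z, a j ≤ ts z ∧ ts z ≤ a j + l j)
    (htsT : ∀ z, ts z ≤ T)
    (hCmax : Cmax = ∑ z, (∑ j ∈ K z, e j) ^ b) :
    Cmax ≤ 2 ^ (b - 1) * ((lmax : ℝ) + 1) ^ b * b ^ b * Cmin := by
  have hL : (0:ℝ) ≤ (lmax : ℝ) + 1 := by positivity
  set S : Fin m → ℝ := fun z => ∑ j ∈ K z, e j / ((l j : ℝ) + 1) with hS
  have hSnn : ∀ z, 0 ≤ S z := fun z =>
    Finset.sum_nonneg fun j _ => div_nonneg (he j) (by positivity)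
  -- step 1: (∑ e)^b ≤ (lmax+1)^b * (S z)^b
  have h1 : ∀ z, (∑ j ∈ K z, e j) ^ b ≤ ((lmax : ℝ) + 1) ^ b * (S z) ^ b := by
    intro z
    have hsum : (∑ j ∈ K z, e j) ≤ ((lmax : ℝ) + 1) * S z := by
      rw [hS, Finset.mul_sum]
      apply Finset.sum_le_sum
      intro j _
      have hlj : (0:ℝ) < (l j : ℝ) + 1 := by positivity
      have h1 : ((l j : ℝ) + 1) * (e j / ((l j : ℝ) + 1)) = e j := by
        field_simp
      calc e j = ((l j : ℝ) + 1) * (e j / ((l j : ℝ) + 1)) := h1.symm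
        _ ≤ ((lmax : ℝ) + 1) * (e j / ((l j : ℝ) + 1)) := by
            apply mul_le_mul_of_nonneg_right
            · have h2 : (l j : ℝ) ≤ (lmax : ℝ) := Nat.cast_le.mpr (hl j)
              linarith
            · exact div_nonneg (he j) hlj.le
    calc (∑ j ∈ K z, e j) ^ b ≤ (((lmax : ℝ) + 1) * S z) ^ b :=
          Real.rpow_le_rpow (Finset.sum_nonneg fun j _ => he j) hsum (by linarith)
      _ = ((lmax : ℝ) + 1) ^ b * (S z) ^ b := Real.mul_rpow hL (hSnn z)
  -- step 2: ∑ z, (S z)^b ≤ CAVR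
  set F : ℕ → ℝ := fun s =>
    (∑ j ∈ Finset.univ.filter (fun j : Fin n => a j ≤ s ∧ s ≤ a j + l j),
        e j / ((l j : ℝ) + 1)) ^ b with hF
  have hFnn : ∀ s, 0 ≤ F s := fun s =>
    Real.rpow_nonneg (Finset.sum_nonneg fun j _ => div_nonneg (he j) (by positivity)) b
  have h2 : ∑ z, (S z) ^ b ≤ CAVR := by
    have hzF : ∀ z, (S z) ^ b ≤ F (ts z) := by
      intro z
      apply Real.rpow_le_rpow (hSnn z)
      · apply Finset.sum_le_sum_of_subset_of_nonneg
        · intro j hj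
          simp only [Finset.mem_filter, Finset.mem_univ, true_and]
          exact hts z j hj
        · intro j _ _
          exact div_nonneg (he j) (by positivity)
      · linarith
    calc ∑ z, (S z) ^ b ≤ ∑ z, F (ts z) := Finset.sum_le_sum fun z _ => hzF z
      _ = ∑ s ∈ Finset.univ.image ts, F s :=
          (Finset.sum_image (fun x _ y _ h => hinj h)).symm
      _ ≤ ∑ s ∈ Finset.range (T + 1), F s := by
          apply Finset.sum_le_sum_of_subset_of_nonneg
          · intro s hs
            simp only [Finset.mem_image] at hs
            obtain ⟨z, _, rfl⟩ := hs
            exact Finset.mem_range.mpr (Nat.lt_succ_of_le (htsT z))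
          · intro s _ _; exact hFnn s
      _ = CAVR := hCAVR.symm
  have hmain : Cmax ≤ ((lmax : ℝ) + 1) ^ b * CAVR := by
    calc Cmax = ∑ z, (∑ j ∈ K z, e j) ^ b := hCmax
      _ ≤ ∑ z, ((lmax : ℝ) + 1) ^ b * (S z) ^ b := Finset.sum_le_sum fun z _ => h1 z
      _ = ((lmax : ℝ) + 1) ^ b * ∑ z, (S z) ^ b := by rw [Finset.mul_sum]
      _ ≤ ((lmax : ℝ) + 1) ^ b * CAVR :=
          mul_le_mul_of_nonneg_left h2 (Real.rpow_nonneg hL b)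
  have hLb : (0:ℝ) ≤ ((lmax : ℝ) + 1) ^ b := Real.rpow_nonneg hL b
  calc Cmax ≤ ((lmax : ℝ) + 1) ^ b * CAVR := hmain
    _ ≤ ((lmax : ℝ) + 1) ^ b * (2 ^ (b - 1) * b ^ b * Cmin) :=
        mul_le_mul_of_nonneg_left hYDS hLb
    _ = 2 ^ (b - 1) * ((lmax : ℝ) + 1) ^ b * b ^ b * Cmin := by ring
end

section
/- Given 3m positive integers b_1, ..., b_{3m} with M/4 < b_i < M/2 and ∑ b_i = mM, an assignment t : {1,…,3m} → {1,…,m} with ∑_{j : t(j)=k} b_j = M for every k exists if and only if a 3-partition of {b_i} into m triples each summing to M exists. -/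
open Finset

theorem three_partition_reduction (m M : ℕ) (hm : 0 < m) (hM : 0 < M)
    (b : Fin (3 * m) → ℕ)
    (hrange : ∀ i, M < 4 * b i ∧ 2 * b i < M)
    (hsum : ∑ i, b i = m * M) :
    (∃ t : Fin (3 * m) → Fin m,
        ∀ k : Fin m, ∑ j ∈ Finset.univ.filter (fun j => t j = k), b j = M) ↔
      (∃ parts : Fin m → Finset (Fin (3 * m)),
        (∀ k k' : Fin m, k ≠ k' → Disjoint (parts k) (parts k')) ∧
        (∀ j : Fin (3 * m), ∃ k, j ∈ parts k) ∧
        (∀ k : Fin m, (parts k).card = 3 ∧ ∑ j ∈ parts k, b j = M)) := by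
  constructor
  · rintro ⟨t, ht⟩
    refine ⟨fun k => Finset.univ.filter (fun j => t j = k), ?_, ?_, ?_⟩
    · intro k k' hkk'
      simp only [Finset.disjoint_left, Finset.mem_filter]
      rintro j ⟨-, h1⟩ ⟨-, h2⟩
      exact hkk' (h1 ▸ h2 ▸ rfl)
    · intro j; exact ⟨t j, by simp⟩
    · intro k
      have hS : ∑ j ∈ Finset.univ.filter (fun j => t j = k), b j = M := ht k
      set P := Finset.univ.filter (fun j => t j = k) with hP
      refine ⟨?_, hS⟩
      have hne : P.Nonempty := by
        by_contra h
        rw [Finset.not_nonempty_iff_eq_empty] at h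
        rw [h] at hS
        simp at hS
        omega
      have h1 : ∑ j ∈ P, 2 * b j < ∑ j ∈ P, M :=
        Finset.sum_lt_sum_of_nonempty hne (fun i _ => (hrange i).2)
      have h2 : ∑ j ∈ P, M < ∑ j ∈ P, 4 * b j :=
        Finset.sum_lt_sum_of_nonempty hne (fun i _ => (hrange i).1)
      rw [← Finset.mul_sum, hS, Finset.sum_const, smul_eq_mul] at h1
      rw [← Finset.mul_sum, hS, Finset.sum_const, smul_eq_mul] at h2
      have hc2 : 2 < P.card := by
        by_contra h
        push_neg at h
        have := Nat.mul_le_mul_right M h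
        omega
      have hc4 : P.card < 4 := by
        by_contra h
        push_neg at h
        have := Nat.mul_le_mul_right M h
        omega
      have hc : P.card = 3 := by omega
      simpa using hc
  · rintro ⟨parts, hdisj, hcover, hsums⟩
    choose t ht using hcover
    refine ⟨t, fun k => ?_⟩
    have : Finset.univ.filter (fun j => t j = k) = parts k := by
      ext j
      simp only [Finset.mem_filter, Finset.mem_univ, true_and]
      constructor
      · rintro rfl; exact ht j
      · intro hj
        by_contra hne
        exact Finset.disjoint_left.mp (hdisj _ _ hne) (ht j) hj
    rw [this]; exact (hsums k).2
end
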